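/- arXiv:1907.13479 — 2 statements merged into one kernel-verified Lean document; each statement's English description precedes it below -/
import Mathlib

section
/- Let a and m be integers with |a| > 1 and m ≥ 3. Let r be the largest prime divisor of m and let l = m / (m)_r be the r′-part of m. Then the largest primitive divisor satisfies k_m(a) = |Φ_m(a)| / gcd(r, Φ_l(a)), where Φ_j denotes the j-th cyclotomic polynomial. Furthermore, gcd(r, Φ_l(a)) = 1 whenever l does not divide r − 1. -/
/-- `eOrd r a` : for an odd prime `r`, the multiplicative order of `a` modulo `r`
(i.e. the least `m ≥ 1` with `r ∣ a ^ m - 1`, and `0` if no such `m` exists);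
for `r = 2`, it is `1` if `4 ∣ a - 1`, `2` if `4 ∣ a + 1`, and `0` otherwise. -/
noncomputable def eOrd (r : ℕ) (a : ℤ) : ℕ :=
  if r = 2 then (if (4 : ℤ) ∣ a - 1 then 1 else if (4 : ℤ) ∣ a + 1 then 2 else 0)
  else sInf {m : ℕ | 0 < m ∧ (r : ℤ) ∣ a ^ m - 1}

/-- `Rset m a` : the set of primitive prime divisors of `a ^ m - 1`,
i.e. the primes `r` with `eOrd r a = m`. -/
noncomputable def Rset (m : ℕ) (a : ℤ) : Set ℕ := {r | r.Prime ∧ eOrd r a = m}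


open scoped Classical in
/-- The largest primitive divisor `k_m(a)` of `a ^ m - 1`: the product over all
primitive prime divisors `r` of `a ^ m - 1` of the `r`-part of `|a ^ m - 1|`
(of `|a + 1|` in the case `m = 2`). -/
noncomputable def kPrim (m : ℕ) (a : ℤ) : ℕ :=
  let x : ℕ := if m = 2 then (a + 1).natAbs else (a ^ m - 1).natAbs
  ∏ r ∈ x.primeFactors.filter (fun r => r ∈ Rset m a), r ^ x.factorization r

/-! Put `C = |Φ m (a)|`. Modulo a prime `q`, `q ∣ Φ n (a)` says exactly that `a` has order the
`q'`-part of `n`, which then divides `q - 1`. Hence a prime `q ≠ r` dividing `C` cannot divide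
`m` (else `r ∣ q - 1` while `q ≤ r`), so `a` has order `m` modulo `q` and `q` is primitive.
Conversely a primitive prime divides no `Φ d (a)` with `d` a proper divisor of `m`, so it divides
`C` and `a ^ m - 1` equally often. Thus `k_m(a)` is the `r'`-part of `C`. As for `r` itself,
`r ∣ Φ m (a)` iff `a` has order `l` modulo `r` iff `r ∣ Φ l (a)`, which forces `l ∣ r - 1`,
and `r ^ 2` never divides `Φ m (a)`; so the `r`-part of `C` is `gcd(r, Φ l (a))`. -/

open Polynomial Finset

lemma orderOf_eq_sInf {G : Type*} [Monoid G] (x : G) :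
    orderOf x = sInf {n | 0 < n ∧ x ^ n = 1} := by
  rcases (orderOf x).eq_zero_or_pos with h | h
  · rw [h, eq_comm, Nat.sInf_eq_zero]
    exact Or.inr (Set.eq_empty_of_forall_notMem fun n hn => orderOf_eq_zero_iff'.mp h n hn.1 hn.2)
  · exact le_antisymm
      (le_csInf ⟨_, h, pow_orderOf_eq_one x⟩ fun n hn => orderOf_le_of_pow_eq_one hn.1 hn.2)
      (Nat.sInf_le ⟨h, pow_orderOf_eq_one x⟩)

lemma Nat.ordCompl_ordCompl (n p : ℕ) : ordCompl[p] (ordCompl[p] n) = ordCompl[p] n := by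
  by_cases hp : p.Prime
  · exact Nat.ordCompl_div_pow_of_dvd _ hp (Nat.ordProj_dvd n p)
  · exact Nat.ordCompl_of_not_prime _ p hp

lemma Int.gcd_natCast_eq_one_of_not_dvd {r : ℕ} (hr : r.Prime) {x : ℤ}
    (h : ¬ (r : ℤ) ∣ x) : Int.gcd r x = 1 :=
  Int.isCoprime_iff_gcd_eq_one.mp
    ((Prime.coprime_iff_not_dvd (Nat.prime_iff_prime_int.mp hr)).mpr h)

lemma intCast_dvd_pow_sub_one_iff (q : ℕ) (a : ℤ) (n : ℕ) :
    (q : ℤ) ∣ a ^ n - 1 ↔ (a : ZMod q) ^ n = 1 := by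
  rw [← ZMod.intCast_zmod_eq_zero_iff_dvd, Int.cast_sub, Int.cast_pow, Int.cast_one, sub_eq_zero]

lemma intCast_dvd_cyclotomic_eval_iff (q n : ℕ) (a : ℤ) :
    (q : ℤ) ∣ (cyclotomic n ℤ).eval a ↔ (cyclotomic n (ZMod q)).IsRoot (a : ZMod q) := by
  rw [← map_cyclotomic_int n (ZMod q), IsRoot.def, eval_intCast_map, eq_intCast,
    ZMod.intCast_zmod_eq_zero_iff_dvd, Int.cast_id]

theorem intCast_dvd_cyclotomic_eval_iff_isPrimitiveRoot {q n : ℕ} (hq : q.Prime) (hn : n ≠ 0)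
    (a : ℤ) :
    (q : ℤ) ∣ (cyclotomic n ℤ).eval a ↔ IsPrimitiveRoot (a : ZMod q) (ordCompl[q] n) := by
  have := Fact.mk hq
  have : NeZero ((ordCompl[q] n : ℕ) : ZMod q) :=
    ⟨(ZMod.natCast_eq_zero_iff _ _).not.mpr (Nat.not_dvd_ordCompl hq hn)⟩
  rw [intCast_dvd_cyclotomic_eval_iff,
    ← isRoot_cyclotomic_prime_pow_mul_iff_of_charP (k := n.factorization q),
    Nat.ordProj_mul_ordCompl_eq_self]

theorem ordCompl_dvd_sub_one_of_dvd_cyclotomic_eval {q n : ℕ} (hq : q.Prime) (hn : n ≠ 0)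
    {a : ℤ} (h : (q : ℤ) ∣ (cyclotomic n ℤ).eval a) : ordCompl[q] n ∣ q - 1 := by
  have := Fact.mk hq
  have hζ := (intCast_dvd_cyclotomic_eval_iff_isPrimitiveRoot hq hn a).mp h
  rw [hζ.eq_orderOf]
  exact ZMod.orderOf_dvd_card_sub_one (hζ.ne_zero (Nat.ordCompl_pos q hn).ne')

lemma cyclotomic_mul_dvd_geom_sum_X_pow (R : Type*) [CommRing R] [IsDomain R] {s k : ℕ}
    (hs : 0 < s) (hk : 1 < k) : cyclotomic (s * k) R ∣ ∑ i ∈ range k, (X ^ s) ^ i := by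
  have hsk : s * k ≠ 0 := by positivity
  have hprod := X_pow_sub_one_mul_prod_cyclotomic_eq_X_pow_sub_one_of_dvd R
    (dvd_mul_right s k) hsk
  rw [pow_mul, ← mul_geom_sum (X ^ s : R[X]) k] at hprod
  have hne : (X ^ s - 1 : R[X]) ≠ 0 := by simpa using X_pow_sub_C_ne_zero hs (1 : R)
  rw [← mul_left_cancel₀ hne hprod]
  refine dvd_prod_of_mem _ (mem_sdiff.mpr ⟨Nat.mem_divisors_self _ hsk, fun h => ?_⟩)
  exact (Nat.le_of_dvd hs (Nat.dvd_of_mem_divisors h)).not_gt (lt_mul_of_one_lt_right hs hk)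

lemma not_sq_dvd_geom_sum_of_dvd_sub_one {p : ℕ} (hp : p.Prime) (hodd : Odd p) {b : ℤ}
    (hb : (p : ℤ) ∣ b - 1) : ¬ (p : ℤ) ^ 2 ∣ ∑ i ∈ range p, b ^ i := by
  obtain ⟨t, ht⟩ := hb
  obtain rfl : b = 1 + p * t := by linarith
  intro h
  have hsub := odd_sq_dvd_geom_sum₂_sub (R := ℤ) 1 t hodd
  simp only [one_pow, mul_one] at hsub
  have hpp : (p : ℤ) * p ∣ p * 1 := by simpa [sq] using (dvd_sub h hsub)
  exact (Nat.prime_iff_prime_int.mp hp).not_dvd_one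
    ((mul_dvd_mul_iff_left (by exact_mod_cast hp.ne_zero)).mp hpp)

lemma not_four_dvd_sq_add_one (c : ℤ) : ¬ 4 ∣ c ^ 2 + 1 := by
  have hc : ∀ x : ZMod 4, x ^ 2 + 1 ≠ 0 := by decide
  intro h
  have h4 := (ZMod.intCast_zmod_eq_zero_iff_dvd (c ^ 2 + 1) 4).mpr (by exact_mod_cast h)
  push_cast at h4
  exact hc _ h4

/-- With `s = n / p`, `Φ n (a)` divides `∑ i < p, (a ^ s) ^ i`, and `a ^ s ≡ 1 [ZMOD p]` once
`p ∣ Φ n (a)`; such a sum is `≡ p` modulo `p ^ 2` for odd `p`, and for `p = 2` it is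
`(a ^ (s / 2)) ^ 2 + 1` because `n > 2` makes `s` even. -/
theorem not_sq_dvd_cyclotomic_eval {p n : ℕ} (hp : p.Prime) (hpn : p ∣ n) (hn : 2 < n)
    (a : ℤ) : ¬ (p : ℤ) ^ 2 ∣ (cyclotomic n ℤ).eval a := by
  intro hsq
  set s := n / p
  have hn_eq : n = s * p := (Nat.div_mul_cancel hpn).symm
  have hs : 0 < s := Nat.div_pos (Nat.le_of_dvd (by omega) hpn) hp.pos
  have hdvd : (cyclotomic n ℤ).eval a ∣ ∑ i ∈ range p, (a ^ s) ^ i := by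
    simpa [hn_eq, eval_finsetSum] using
      eval_dvd (cyclotomic_mul_dvd_geom_sum_X_pow ℤ hs hp.one_lt) (x := a)
  have hp_dvd : (p : ℤ) ∣ (cyclotomic n ℤ).eval a := (dvd_pow_self _ two_ne_zero).trans hsq
  have hord : ordCompl[p] s = ordCompl[p] n := Nat.ordCompl_div_of_dvd hp hpn
  have has : (p : ℤ) ∣ a ^ s - 1 := by
    have hζ := (intCast_dvd_cyclotomic_eval_iff_isPrimitiveRoot hp (by omega) a).mp hp_dvd
    rw [intCast_dvd_pow_sub_one_iff, hζ.pow_eq_one_iff_dvd, ← hord]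
    exact Nat.ordCompl_dvd s p
  rcases hp.eq_two_or_odd' with rfl | hodd
  · obtain ⟨t, ht⟩ : Even s := by
      refine Nat.not_odd_iff_even.mp fun hodd => ?_
      have hself := (Nat.ordCompl_eq_self_iff_zero_or_not_dvd s Nat.prime_two).mpr
        (Or.inr (Nat.two_dvd_ne_zero.mpr (Nat.odd_iff.mp hodd)))
      have h1 := Nat.le_of_dvd one_pos
        (hord ▸ ordCompl_dvd_sub_one_of_dvd_cyclotomic_eval hp (by omega) hp_dvd)
      omega
    refine not_four_dvd_sq_add_one (a ^ t) ?_
    have hsum : ∑ i ∈ range 2, (a ^ s) ^ i = (a ^ t) ^ 2 + 1 := by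
      rw [sum_range_succ, sum_range_one, ht]
      ring
    simpa [hsum] using hsq.trans hdvd
  · exact not_sq_dvd_geom_sum_of_dvd_sub_one hp hodd has (hsq.trans hdvd)

theorem ordProj_natAbs_cyclotomic_eval_eq_gcd {r m : ℕ} (hr : r.Prime) (hrm : r ∣ m)
    (hm : 2 < m) (a : ℤ) : r ^ ((cyclotomic m ℤ).eval a).natAbs.factorization r =
      Int.gcd r ((cyclotomic (ordCompl[r] m) ℤ).eval a) := by
  have hm0 : m ≠ 0 := by omega
  have hiff : (r : ℤ) ∣ (cyclotomic m ℤ).eval a ↔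
      (r : ℤ) ∣ (cyclotomic (ordCompl[r] m) ℤ).eval a := by
    rw [intCast_dvd_cyclotomic_eval_iff_isPrimitiveRoot hr hm0,
      intCast_dvd_cyclotomic_eval_iff_isPrimitiveRoot hr (Nat.ordCompl_pos r hm0).ne',
      Nat.ordCompl_ordCompl]
  by_cases hdvd : (r : ℤ) ∣ (cyclotomic (ordCompl[r] m) ℤ).eval a
  · have hsq := not_sq_dvd_cyclotomic_eval hr hrm hm a
    have hC : ((cyclotomic m ℤ).eval a).natAbs ≠ 0 := by
      intro h0
      exact hsq (Int.natAbs_eq_zero.mp h0 ▸ dvd_zero _)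
    have h1 : 1 ≤ ((cyclotomic m ℤ).eval a).natAbs.factorization r :=
      (hr.pow_dvd_iff_le_factorization hC).mp (by simpa using Int.natCast_dvd.mp (hiff.mpr hdvd))
    have h2 : ¬ 2 ≤ ((cyclotomic m ℤ).eval a).natAbs.factorization r := fun h =>
      hsq (by exact_mod_cast Int.natCast_dvd.mpr ((hr.pow_dvd_iff_le_factorization hC).mpr h))
    rw [show ((cyclotomic m ℤ).eval a).natAbs.factorization r = 1 by omega, pow_one]
    exact_mod_cast (Int.gcd_eq_left (by positivity) hdvd).symm
  · rw [Int.gcd_natCast_eq_one_of_not_dvd hr hdvd,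
      Nat.factorization_eq_zero_of_not_dvd (mt Int.natCast_dvd.mpr (hiff.not.mpr hdvd)), pow_zero]

lemma eOrd_eq_orderOf {q : ℕ} (hq : q ≠ 2) (a : ℤ) : eOrd q a = orderOf (a : ZMod q) := by
  simp only [eOrd, if_neg hq, orderOf_eq_sInf, intCast_dvd_pow_sub_one_iff]

lemma mem_Rset_iff {m q : ℕ} (hm : 3 ≤ m) (a : ℤ) :
    q ∈ Rset m a ↔ q.Prime ∧ q ≠ 2 ∧ orderOf (a : ZMod q) = m := by
  by_cases hq : q = 2
  · subst hq
    simp only [Rset, eOrd, Set.mem_ofPred_eq, ne_eq, not_true_eq_false, false_and,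
      and_false, iff_false, not_and]
    intro _
    split_ifs <;> omega
  · simp [Rset, eOrd_eq_orderOf hq, hq]

lemma not_dvd_of_mem_Rset {m q : ℕ} {a : ℤ} (hm : 3 ≤ m) (hq : q ∈ Rset m a) :
    ¬ q ∣ m := by
  obtain ⟨hq, -, hord⟩ := (mem_Rset_iff hm a).mp hq
  have := Fact.mk hq
  have hζ := hord ▸ IsPrimitiveRoot.orderOf (a : ZMod q)
  have hmq : m ∣ q - 1 := hord ▸ ZMod.orderOf_dvd_card_sub_one (hζ.ne_zero (by omega))
  intro hqm
  have hmq' := Nat.le_of_dvd (Nat.sub_pos_of_lt hq.one_lt) hmq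
  have hqm' := Nat.le_of_dvd (by omega) hqm
  omega

lemma factorization_natAbs_cyclotomic_eval_of_mem_Rset {m q : ℕ} {a : ℤ} (hm : 3 ≤ m)
    (ha : a ^ m - 1 ≠ 0) (hq : q ∈ Rset m a) :
    ((cyclotomic m ℤ).eval a).natAbs.factorization q = (a ^ m - 1).natAbs.factorization q := by
  obtain ⟨hqp, -, hord⟩ := (mem_Rset_iff hm a).mp hq
  have hsplit : a ^ m - 1 =
      (cyclotomic m ℤ).eval a * ∏ d ∈ m.properDivisors, (cyclotomic d ℤ).eval a := by
    have h := congrArg (eval a) (prod_cyclotomic_eq_X_pow_sub_one (by omega : 0 < m) ℤ)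
    rw [← Nat.cons_self_properDivisors (by omega), prod_cons, eval_mul, eval_prod] at h
    simpa using h.symm
  have hcoprime : ¬ q ∣ (∏ d ∈ m.properDivisors, (cyclotomic d ℤ).eval a).natAbs := by
    rw [← Int.natCast_dvd, (Nat.prime_iff_prime_int.mp hqp).dvd_finsetProd_iff]
    rintro ⟨d, hd, hdvd⟩
    obtain ⟨-, hlt⟩ := Nat.mem_properDivisors.mp hd
    have hpow := (intCast_dvd_pow_sub_one_iff q a d).mp
      (hdvd.trans (by simpa using eval_dvd (cyclotomic.dvd_X_pow_sub_one d ℤ) (x := a)))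
    rw [← orderOf_dvd_iff_pow_eq_one, hord] at hpow
    exact absurd (Nat.le_of_dvd (Nat.pos_of_mem_properDivisors hd) hpow) (by omega)
  rw [hsplit] at ha ⊢
  rw [Int.natAbs_mul, Nat.factorization_mul (by simpa using left_ne_zero_of_mul ha)
    (by simpa using right_ne_zero_of_mul ha), Finsupp.add_apply,
    Nat.factorization_eq_zero_of_not_dvd hcoprime, add_zero]

lemma mem_Rset_of_dvd_cyclotomic_eval {m q r : ℕ} {a : ℤ} (hm : 3 ≤ m) (hr : r.Prime)
    (hrm : r ∣ m) (hrmax : ∀ s : ℕ, s.Prime → s ∣ m → s ≤ r) (hq : q.Prime)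
    (hqr : q ≠ r) (h : (q : ℤ) ∣ (cyclotomic m ℤ).eval a) : q ∈ Rset m a := by
  have hm0 : m ≠ 0 := by omega
  have hsub := ordCompl_dvd_sub_one_of_dvd_cyclotomic_eval hq hm0 h
  have hqm : ¬ q ∣ m := by
    intro hqm
    have hrl : r ∣ ordCompl[q] m :=
      Nat.dvd_ordCompl_of_dvd_not_dvd hrm fun h => hqr ((Nat.prime_dvd_prime_iff_eq hq hr).mp h)
    have hrq := Nat.le_of_dvd (Nat.sub_pos_of_lt hq.one_lt) (hrl.trans hsub)
    have hqr' := hrmax q hq hqm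
    omega
  have hl : ordCompl[q] m = m := (Nat.ordCompl_eq_self_iff_zero_or_not_dvd m hq).mpr (Or.inr hqm)
  rw [hl] at hsub
  have := Fact.mk hq
  refine (mem_Rset_iff hm a).mpr ⟨hq, ?_, ?_⟩
  · rintro rfl
    have hm1 := Nat.le_of_dvd one_pos hsub
    omega
  · exact (hl ▸ (intCast_dvd_cyclotomic_eval_iff_isPrimitiveRoot hq hm0 a).mp h).eq_orderOf.symm

open scoped Classical in
lemma kPrim_eq_prod_filter {m : ℕ} (hm : m ≠ 2) (a : ℤ) :
    kPrim m a = ((a ^ m - 1).natAbs.factorization.filter (· ∈ Rset m a)).prod (· ^ ·) := by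
  rw [kPrim, if_neg hm, Finsupp.prod_filter_index, Finsupp.support_filter,
    Nat.support_factorization]

lemma pow_sub_one_ne_zero_of_one_lt_abs {a : ℤ} (ha : 1 < |a|) {m : ℕ} (hm : m ≠ 0) :
    a ^ m - 1 ≠ 0 := by
  rw [sub_ne_zero]
  intro h
  have h1 := one_lt_pow₀ ha hm
  rw [← abs_pow, h, abs_one] at h1
  exact h1.false

theorem kPrim_eq_ordCompl {a : ℤ} {m r : ℕ} (ha : 1 < |a|) (hm : 3 ≤ m) (hr : r.Prime)
    (hrm : r ∣ m) (hrmax : ∀ s : ℕ, s.Prime → s ∣ m → s ≤ r) :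
    kPrim m a = ordCompl[r] ((cyclotomic m ℤ).eval a).natAbs := by
  have hN := pow_sub_one_ne_zero_of_one_lt_abs ha (m := m) (by omega)
  have hC : ((cyclotomic m ℤ).eval a).natAbs ≠ 0 := by
    intro h0
    refine hN (zero_dvd_iff.mp ?_)
    simpa [Int.natAbs_eq_zero.mp h0] using eval_dvd (cyclotomic.dvd_X_pow_sub_one m ℤ) (x := a)
  rw [kPrim_eq_prod_filter (by omega),
    ← Nat.prod_factorization_pow_eq_self (Nat.ordCompl_pos r hC).ne', Nat.factorization_ordCompl]
  refine congrArg (fun f : ℕ →₀ ℕ => f.prod (· ^ ·)) (Finsupp.ext fun q => ?_)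
  rw [Finsupp.filter_apply, Finsupp.erase_apply]
  split_ifs with hqR hqr hqr
  · exact absurd (hqr ▸ hrm) (not_dvd_of_mem_Rset hm hqR)
  · exact (factorization_natAbs_cyclotomic_eval_of_mem_Rset hm hN hqR).symm
  · rfl
  · by_cases hq : q.Prime
    · refine (Nat.factorization_eq_zero_of_not_dvd fun h => hqR ?_).symm
      exact mem_Rset_of_dvd_cyclotomic_eval hm hr hrm hrmax hq hqr (Int.natCast_dvd.mpr h)
    · exact (Nat.factorization_eq_zero_of_not_prime _ hq).symm

theorem kPrim_eq_cyclotomic (a : ℤ) (m : ℕ) (ha : 1 < |a|) (hm : 3 ≤ m)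
    (r : ℕ) (hr : r.Prime) (hrm : r ∣ m) (hrmax : ∀ s : ℕ, s.Prime → s ∣ m → s ≤ r)
    (l : ℕ) (hl : l = m / r ^ (m.factorization r)) :
    kPrim m a = ((Polynomial.cyclotomic m ℤ).eval a).natAbs /
        Int.gcd (r : ℤ) ((Polynomial.cyclotomic l ℤ).eval a) ∧
      (¬ l ∣ r - 1 → Int.gcd (r : ℤ) ((Polynomial.cyclotomic l ℤ).eval a) = 1) := by
  subst hl
  refine ⟨?_, fun hl => Int.gcd_natCast_eq_one_of_not_dvd hr fun hdvd => hl ?_⟩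
  · rw [kPrim_eq_ordCompl ha hm hr hrm hrmax,
      ordProj_natAbs_cyclotomic_eval_eq_gcd hr hrm (by omega)]
  · simpa [Nat.ordCompl_ordCompl] using
      ordCompl_dvd_sub_one_of_dvd_cyclotomic_eval hr (Nat.ordCompl_pos r (by omega)).ne' hdvd
end

section
/- Suppose G is a finite group, K is a normal subgroup of G, and w is a prime dividing |K|. If G/K has a noncyclic Sylow t-subgroup for some odd prime t ≠ w, then G contains an element of order t·w. -/
/-!
By the Frattini argument, the normalizer `N` of a Sylow `w`-subgroup `W` of `K` maps onto
`G ⧸ K`, so `N` has a noncyclic Sylow `t`-subgroup. As `t` is odd, a minimal noncyclic subgroup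
of it has class at most two and a homomorphic `t`-th power map, which yields a copy `E` of
`C_t × C_t`. `E` acts by conjugation on the nontrivial abelian `w`-group `Z(W)`. If no nonidentity
element of `E` fixed a nontrivial `z ∈ Z(W)`, the orbit products of `z` over `E` and over its
`t + 1` subgroups of order `t` would all be trivial, and comparing them gives `z ^ t = 1`, which
is impossible. So some `e ∈ E` of order `t` commutes with an element of order `w`.
-/

open Subgroup Function Multiplicative
open scoped commutatorElement

section FixedPointFree

variable {p : ℕ} {V : Type*} [CommGroup V]

lemma smul_prod_univ_smul {A : Type*} [Group A] [Fintype A] [MulDistribMulAction A V]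
    (x : A) (v : V) : x • ∏ y : A, y • v = ∏ y : A, y • v := by
  simp_rw [Finset.smul_prod', ← mul_smul]
  exact Fintype.prod_equiv (Equiv.mulLeft x) _ _ fun _ => rfl

variable [MulDistribMulAction (Multiplicative (ZMod p × ZMod p)) V]

lemma smul_prod_line [NeZero p] (y : ZMod p × ZMod p) (v : V) :
    ofAdd y • ∏ i : ZMod p, ofAdd (i • y) • v = ∏ i : ZMod p, ofAdd (i • y) • v := by
  simp_rw [Finset.smul_prod', ← mul_smul, ← ofAdd_add]
  exact Fintype.prod_equiv (Equiv.addRight 1) _ _ fun i => by simp [add_smul, add_comm]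

/-- Every nonzero point of `(ZMod p)²` lies on exactly one of the `p + 1` lines through `0`,
while `0` lies on all of them. -/
lemma prod_lines_eq [Fact p.Prime] (v : V) :
    (∏ j : ZMod p, ∏ i : ZMod p, ofAdd (i • ((1 : ZMod p), j)) • v) *
      ∏ i : ZMod p, ofAdd (i • ((0 : ZMod p), (1 : ZMod p))) • v =
    v ^ p * ∏ y : Multiplicative (ZMod p × ZMod p), y • v := by
  set T : ZMod p → ZMod p → V := fun i k => ofAdd (i, k) • v
  have hrow : ∀ i ∈ Finset.univ.erase (0 : ZMod p), ∏ j, T i (i * j) = ∏ k, T i k :=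
    fun i hi => Fintype.prod_equiv (Equiv.mulLeft₀ i (Finset.ne_of_mem_erase hi)) _ _ fun _ => rfl
  have hzero : ∏ j : ZMod p, T 0 (0 * j) = v ^ p := by
    simp only [T, zero_mul, Prod.mk_zero_zero, ofAdd_zero, one_smul, Finset.prod_const,
      Finset.card_univ, ZMod.card]
  calc (∏ j : ZMod p, ∏ i : ZMod p, ofAdd (i • ((1 : ZMod p), j)) • v) *
        ∏ i : ZMod p, ofAdd (i • ((0 : ZMod p), (1 : ZMod p))) • v
      = (∏ i, ∏ j, T i (i * j)) * ∏ k, T 0 k := by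
        rw [Finset.prod_comm]; simp [T]
    _ = v ^ p * ((∏ k, T 0 k) * ∏ i ∈ Finset.univ.erase 0, ∏ k, T i k) := by
        rw [← Finset.mul_prod_erase _ _ (Finset.mem_univ 0), hzero, Finset.prod_congr rfl hrow]
        ac_rfl
    _ = v ^ p * ∏ y : Multiplicative (ZMod p × ZMod p), y • v := by
        rw [Finset.mul_prod_erase _ (fun i => ∏ k, T i k) (Finset.mem_univ 0),
          ← Fintype.prod_prod_type']
        exact congrArg _ (Fintype.prod_equiv ofAdd _ _ fun _ => rfl)

theorem pow_eq_one_of_fixedPointFree [Fact p.Prime]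
    (hfree : ∀ x : Multiplicative (ZMod p × ZMod p), x ≠ 1 → ∀ v : V, x • v = v → v = 1)
    (v : V) : v ^ p = 1 := by
  have hline (y : ZMod p × ZMod p) (hy : y ≠ 0) : ∏ i : ZMod p, ofAdd (i • y) • v = 1 :=
    hfree (ofAdd y) (by simpa using hy) _ (smul_prod_line y v)
  have hall := hfree (ofAdd ((1 : ZMod p), (0 : ZMod p))) (by simp) _ (smul_prod_univ_smul _ v)
  have key := prod_lines_eq (p := p) v
  rw [Finset.prod_eq_one fun j _ => hline _ (by simp), hline _ (by simp), hall] at key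
  simpa using key.symm

end FixedPointFree

section ZModProdHom

variable {G : Type*} [Group G] {p : ℕ} [NeZero p] {a b : G}

lemma pow_zmod_val_add (ha : a ^ p = 1) (i j : ZMod p) :
    a ^ (i + j).val = a ^ i.val * a ^ j.val := by
  rw [ZMod.val_add, ← pow_add, ← pow_eq_pow_mod _ ha]

def Commute.zmodProdHom (hab : Commute a b) (ha : a ^ p = 1) (hb : b ^ p = 1) :
    Multiplicative (ZMod p × ZMod p) →* G :=
  MonoidHom.mk' (fun x => a ^ (toAdd x).1.val * b ^ (toAdd x).2.val) fun x y => by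
    simp only [toAdd_mul, Prod.fst_add, Prod.snd_add, pow_zmod_val_add ha, pow_zmod_val_add hb,
      mul_assoc, (hab.pow_pow _ _).left_comm]

lemma Commute.zmodProdHom_injective (hp : p.Prime) (hab : Commute a b) (ha : orderOf a = p)
    (hb : orderOf b = p) (hba : b ∉ zpowers a) :
    Injective (hab.zmodProdHom (ha ▸ pow_orderOf_eq_one a) (hb ▸ pow_orderOf_eq_one b)) := by
  refine (injective_iff_map_eq_one _).2 fun x hx => ?_
  obtain ⟨i, k⟩ := x
  have hx : a ^ i.val * b ^ k.val = 1 := hx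
  have hk : k = 0 := by
    by_contra hk
    have hcop : k.val.gcd (orderOf b) = 1 := by
      rw [hb, Nat.gcd_comm, ← Nat.Coprime, hp.coprime_iff_not_dvd]
      exact Nat.not_dvd_of_pos_of_lt (Nat.pos_of_ne_zero ((ZMod.val_ne_zero k).2 hk)) k.val_lt
    refine hba (zpowers_le.2 ?_ (mem_zpowers_pow_iff.2 hcop))
    rw [eq_inv_of_mul_eq_one_right hx]
    exact inv_mem (pow_mem (mem_zpowers a) _)
  subst hk
  rw [ZMod.val_zero, pow_zero, mul_one, ← orderOf_dvd_iff_pow_eq_one, ha] at hx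
  rw [(ZMod.val_eq_zero i).1 (Nat.eq_zero_of_dvd_of_lt hx i.val_lt)]
  rfl

end ZModProdHom

section CentralCommutator

variable {G : Type*} [Group G] {g h : G}

lemma pow_mul_eq_of_commutator_mem_center (hc : ⁅h, g⁆ ∈ center G) (n : ℕ) :
    h ^ n * g = ⁅h, g⁆ ^ n * g * h ^ n := by
  have hhg : h * g = ⁅h, g⁆ * g * h := by rw [commutatorElement_def]; group
  set c := ⁅h, g⁆
  induction n with
  | zero => simp
  | succ n ih =>
    calc h ^ (n + 1) * g = h * c ^ n * g * h ^ n := by rw [pow_succ', mul_assoc, ih]; group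
      _ = c ^ n * (h * g) * h ^ n := by rw [mem_center_iff.1 (pow_mem hc n) h]; group
      _ = c ^ (n + 1) * g * h ^ (n + 1) := by rw [hhg]; group

lemma mul_pow_eq_of_commutator_mem_center (hc : ⁅h, g⁆ ∈ center G) (n : ℕ) :
    (g * h) ^ n = ⁅h, g⁆ ^ n.choose 2 * g ^ n * h ^ n := by
  induction n with
  | zero => simp
  | succ n ih =>
    calc (g * h) ^ (n + 1) = ⁅h, g⁆ ^ n.choose 2 * g ^ n * (h ^ n * g) * h := by
          rw [pow_succ, ih]; group
      _ = ⁅h, g⁆ ^ n.choose 2 * (g ^ n * ⁅h, g⁆ ^ n) * g * h ^ n * h := by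
          rw [pow_mul_eq_of_commutator_mem_center hc]; group
      _ = ⁅h, g⁆ ^ (n + 1).choose 2 * g ^ (n + 1) * h ^ (n + 1) := by
          rw [mem_center_iff.1 (pow_mem hc n), Nat.choose_succ_succ', Nat.choose_one_right]
          group

lemma commutator_pow_eq_one_of_mem_center {n : ℕ} (hc : ⁅h, g⁆ ∈ center G)
    (hn : h ^ n ∈ center G) : ⁅h, g⁆ ^ n = 1 := by
  have key := pow_mul_eq_of_commutator_mem_center hc n
  rw [← mem_center_iff.1 hn g] at key
  exact mul_eq_right.1 (mul_right_cancel key).symm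

lemma mul_pow_prime_eq_of_commutator_mem_center {p : ℕ} (hp : p.Prime) (hodd : Odd p)
    (hc : ⁅h, g⁆ ∈ center G) (hhp : h ^ p ∈ center G) : (g * h) ^ p = g ^ p * h ^ p := by
  have h2 : 2 < p := by obtain ⟨k, rfl⟩ := hodd; have := hp.two_le; omega
  obtain ⟨m, hm⟩ := hp.dvd_choose_self two_ne_zero h2
  rw [mul_pow_eq_of_commutator_mem_center hc, hm, pow_mul,
    commutator_pow_eq_one_of_mem_center hc hhp, one_pow, one_mul]

end CentralCommutator

namespace Subgroup

variable {G : Type*} [Group G]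

lemma inf_le_center_of_sup_eq_top {M₁ M₂ : Subgroup G} [IsMulCommutative M₁]
    [IsMulCommutative M₂] (h : M₁ ⊔ M₂ = ⊤) : M₁ ⊓ M₂ ≤ center G := by
  intro x hx
  have hle : M₁ ⊔ M₂ ≤ centralizer {x} := sup_le
    ((le_centralizer_iff_isMulCommutative.2 inferInstance).trans
      (centralizer_le (Set.singleton_subset_iff.2 hx.1)))
    ((le_centralizer_iff_isMulCommutative.2 inferInstance).trans
      (centralizer_le (Set.singleton_subset_iff.2 hx.2)))
  rwa [h, top_le_iff, centralizer_eq_top_iff_subset, Set.singleton_subset_iff] at hle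

variable {H K : Subgroup G}

lemma card_lt_card_of_ne_top [Finite G] (hH : H ≠ ⊤) : Nat.card H < Nat.card G :=
  lt_of_le_of_ne H.card_le_card_group (mt (card_eq_iff_eq_top H).1 hH)

lemma eq_of_le_of_index_eq [H.FiniteIndex] (h : H ≤ K) (hi : H.index = K.index) : H = K := by
  by_contra hne
  exact (index_strictAnti (lt_of_le_of_ne h hne)).ne' hi

lemma sup_eq_top_of_index_eq_prime {p : ℕ} (hp : p.Prime) (hH : H.index = p) (hK : ¬ K ≤ H) :
    H ⊔ K = ⊤ := by
  have : H.FiniteIndex := ⟨hH ▸ hp.ne_zero⟩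
  have hlt : H < H ⊔ K := lt_of_le_of_ne le_sup_left fun h => hK (h ▸ le_sup_right)
  have hdvd : (H ⊔ K).index ∣ p := hH ▸ index_dvd_of_le le_sup_left
  have := index_strictAnti hlt
  rcases (Nat.dvd_prime hp).1 hdvd with h | h
  · exact index_eq_one.1 h
  · omega

end Subgroup

namespace IsPGroup

variable {p : ℕ} {Q : Type*} [Group Q] [Finite Q] {M : Subgroup Q}

lemma normal_of_index_eq (hp : p.Prime) (hQ : IsPGroup p Q) (hM : M.index = p) : M.Normal := by
  have := Fact.mk hp
  obtain ⟨n, hn⟩ := IsPGroup.iff_card.1 hQ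
  refine normal_of_index_eq_minFac_card ?_
  rcases n with _ | n
  · have := hM ▸ M.index_dvd_card
    rw [hn, pow_zero] at this
    exact absurd this hp.not_dvd_one
  · rw [hM, hn, hp.pow_minFac n.succ_ne_zero]

lemma pow_mem_of_index_eq (hp : p.Prime) (hQ : IsPGroup p Q) (hM : M.index = p) (g : Q) :
    g ^ p ∈ M := by
  have := hQ.normal_of_index_eq hp hM
  exact hM ▸ M.pow_index_mem g

lemma commutator_mem_of_index_eq (hp : p.Prime) (hQ : IsPGroup p Q) (hM : M.index = p)
    (g h : Q) : ⁅g, h⁆ ∈ M := by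
  have := Fact.mk hp
  have := hQ.normal_of_index_eq hp hM
  have : IsCyclic (Q ⧸ M) := isCyclic_of_prime_card hM
  exact Normal.quotient_commutative_iff_commutator_le.1 inferInstance
    (commutator_mem_commutator (mem_top g) (mem_top h))

lemma exists_le_index_eq (hp : p.Prime) (hQ : IsPGroup p Q) {H : Subgroup Q} (hH : H ≠ ⊤) :
    ∃ M, H ≤ M ∧ M.index = p := by
  have := Fact.mk hp
  obtain ⟨n, hn⟩ := IsPGroup.iff_card.1 hQ
  obtain ⟨k, hk⟩ := IsPGroup.iff_card.1 (hQ.to_subgroup H)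
  have hkn : k < n := (Nat.pow_lt_pow_iff_right hp.one_lt).1 (hk ▸ hn ▸ card_lt_card_of_ne_top hH)
  obtain ⟨M, hM, hHM⟩ := Sylow.exists_subgroup_card_pow_prime_le p
    (hn ▸ pow_dvd_pow p (n.sub_le 1)) H hk (Nat.le_sub_one_of_lt hkn)
  refine ⟨M, hHM, Nat.eq_of_mul_eq_mul_left (pow_pos hp.pos (n - 1)) ?_⟩
  rw [← hM, card_mul_index, hn, hM, ← pow_succ, Nat.sub_add_cancel (Nat.one_le_of_lt hkn)]

lemma exists_mem_center_orderOf_eq [Nontrivial Q] (hp : p.Prime) (hQ : IsPGroup p Q) :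
    ∃ c ∈ center Q, orderOf c = p := by
  have := Fact.mk hp
  have := hQ.center_nontrivial
  obtain ⟨c, hc⟩ := exists_prime_orderOf_dvd_card' (G := center Q) p
    (((hQ.to_subgroup _).card_eq_or_dvd).resolve_left Finite.one_lt_card.ne')
  exact ⟨c, c.2, by rwa [orderOf_coe]⟩

/-- For odd `p`, `g ↦ g ^ p` is a homomorphism into the central subgroup `M₁ ⊓ M₂`, whose index
exceeds `p`, so its kernel has more than `p` elements. -/
theorem exists_commute_notMem_zpowers_of_index_eq (hp : p.Prime) (hodd : Odd p)
    (hQ : IsPGroup p Q) {M₁ M₂ : Subgroup Q} [IsMulCommutative M₁] [IsMulCommutative M₂]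
    (h₁ : M₁.index = p) (h₂ : M₂.index = p) (hne : M₁ ≠ M₂) :
    ∃ a b : Q, orderOf a = p ∧ orderOf b = p ∧ Commute a b ∧ b ∉ zpowers a := by
  have := Fact.mk hp
  have h₁₂ : ¬ M₁ ≤ M₂ := fun h => hne (eq_of_le_of_index_eq h (h₁.trans h₂.symm))
  have h₂₁ : ¬ M₂ ≤ M₁ := fun h => hne (eq_of_le_of_index_eq h (h₂.trans h₁.symm)).symm
  set D := M₁ ⊓ M₂
  have hD : D ≤ center Q := inf_le_center_of_sup_eq_top (sup_eq_top_of_index_eq_prime hp h₁ h₂₁)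
  have hpow (g : Q) : g ^ p ∈ D :=
    ⟨hQ.pow_mem_of_index_eq hp h₁ g, hQ.pow_mem_of_index_eq hp h₂ g⟩
  have hcomm (g h : Q) : ⁅h, g⁆ ∈ D :=
    ⟨hQ.commutator_mem_of_index_eq hp h₁ h g, hQ.commutator_mem_of_index_eq hp h₂ h g⟩
  let φ : Q →* Q := MonoidHom.mk' (· ^ p) fun g h =>
    mul_pow_prime_eq_of_commutator_mem_center hp hodd (hD (hcomm g h)) (hD (hpow h))
  have hker : p < Nat.card φ.ker := by
    have hQ' := card_mul_index φ.ker
    have hrange : Nat.card φ.range ≤ Nat.card D :=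
      card_le_of_le (by rintro _ ⟨g, rfl⟩; exact hpow g)
    have hDi : p < D.index := h₁ ▸ index_strictAnti (inf_lt_left.2 h₁₂)
    have hD' := card_mul_index D
    rw [index_ker] at hQ'
    by_contra! hle
    have := Nat.mul_le_mul hle hrange
    have := Nat.mul_lt_mul_of_pos_right hDi (Nat.card_pos (α := D))
    linarith
  have : Nontrivial Q := Finite.one_lt_card_iff_nontrivial.1
    ((hp.one_lt.trans hker).trans_le (card_le_card_group _))
  obtain ⟨c, hcZ, hc⟩ := hQ.exists_mem_center_orderOf_eq hp
  obtain ⟨b, hbker, hbc⟩ : ∃ b ∈ φ.ker, b ∉ zpowers c := by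
    by_contra! h
    have := card_le_of_le h
    rw [Nat.card_zpowers, hc] at this
    omega
  have hb1 : b ≠ 1 := fun h => hbc (h ▸ one_mem _)
  exact ⟨c, b, hc, orderOf_eq_prime hbker hb1, (mem_center_iff.1 hcZ b).symm, hbc⟩

theorem exists_injective_zmodProd (hp : p.Prime) (hodd : Odd p) (hQ : IsPGroup p Q)
    (hnc : ¬ IsCyclic Q) : ∃ ι : Multiplicative (ZMod p × ZMod p) →* Q, Injective ι := by
  have := Fact.mk hp
  induction hcard : Nat.card Q using Nat.strong_induction_on generalizing Q with
  | _ n ih =>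
  by_cases hsub : ∃ H : Subgroup Q, H ≠ ⊤ ∧ ¬ IsCyclic H
  · obtain ⟨H, hH, hHc⟩ := hsub
    obtain ⟨ι, hι⟩ := ih _ (hcard ▸ card_lt_card_of_ne_top hH) (hQ.to_subgroup H) hHc rfl
    exact ⟨H.subtype.comp ι, H.subtype_injective.comp hι⟩
  push Not at hsub
  have := Nontrivial.of_not_isCyclic hnc
  have hne_top {M : Subgroup Q} (hM : M.index = p) : M ≠ ⊤ := fun h =>
    hp.ne_one (hM.symm.trans (index_eq_one.2 h))
  obtain ⟨M₁, -, h₁⟩ := hQ.exists_le_index_eq hp (bot_ne_top (α := Subgroup Q))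
  obtain ⟨g, -, hg⟩ := SetLike.exists_of_lt (lt_top_iff_ne_top.2 (hne_top h₁))
  obtain ⟨M₂, hgM₂, h₂⟩ := hQ.exists_le_index_eq hp (H := zpowers g)
    fun h => hnc (isCyclic_iff_exists_zpowers_eq_top.2 ⟨g, h⟩)
  have := hsub M₁ (hne_top h₁)
  have := hsub M₂ (hne_top h₂)
  obtain ⟨a, b, ha, hb, hab, hba⟩ := hQ.exists_commute_notMem_zpowers_of_index_eq hp hodd h₁ h₂
    fun h => hg (h ▸ hgM₂ (mem_zpowers g))
  exact ⟨_, hab.zmodProdHom_injective hp ha hb hba⟩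

lemma exists_normal_isMulCommutative {G : Type*} [Group G] [Finite G] [Fact p.Prime]
    {W : Subgroup G} [W.Normal] (hW : IsPGroup p W) (hW1 : W ≠ ⊥) :
    ∃ Z : Subgroup G, Z.Normal ∧ IsMulCommutative Z ∧ IsPGroup p Z ∧ Z ≠ ⊥ := by
  have : Nontrivial W := (nontrivial_iff_ne_bot W).2 hW1
  refine ⟨(center W).map W.subtype, inferInstance, inferInstance, (hW.to_subgroup _).map _, ?_⟩
  rw [Ne, map_eq_bot_iff_of_injective _ W.subtype_injective]
  exact (nontrivial_iff_ne_bot _).1 hW.center_nontrivial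

end IsPGroup

section OrderMul

variable {G : Type*} [Group G]

lemma exists_orderOf_eq_mul_of_commute {t w : ℕ} (htw : t.Coprime w) {e z : G}
    (he : orderOf e = t) (hz : w ∣ orderOf z) (hz0 : orderOf z ≠ 0) (hez : Commute e z) :
    ∃ g : G, orderOf g = t * w := by
  have hw : orderOf (z ^ (orderOf z / w)) = w := orderOf_pow_orderOf_div hz0 hz
  refine ⟨e * z ^ (orderOf z / w), ?_⟩
  rw [(hez.pow_right _).orderOf_mul_eq_mul_orderOf_of_coprime (by rwa [he, hw]), he, hw]

open scoped IsMulCommutative in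
theorem exists_orderOf_eq_mul_of_injective_zmodProd {t w : ℕ} [Fact t.Prime] [Fact w.Prime]
    (htw : t ≠ w) {Z : Subgroup G} [Z.Normal] [IsMulCommutative Z] (hZ : IsPGroup w Z)
    (hZ1 : Z ≠ ⊥) {ι : Multiplicative (ZMod t × ZMod t) →* G} (hι : Injective ι) :
    ∃ g : G, orderOf g = t * w := by
  by_contra! hno
  let _ : MulDistribMulAction (Multiplicative (ZMod t × ZMod t)) Z :=
    MulDistribMulAction.compHom Z (ConjAct.toConjAct.toMonoidHom.comp ι)
  have hfree (x : Multiplicative (ZMod t × ZMod t)) (hx : x ≠ 1) (z : Z) (hxz : x • z = z) :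
      z = 1 := by
    by_contra hz
    have hxz : ι x * z * (ι x)⁻¹ = z := congrArg Subtype.val hxz
    have hxt : x ^ t = 1 := by ext <;> simp
    have he : orderOf (ι x) = t :=
      orderOf_eq_prime (by rw [← map_pow, hxt, map_one]) ((map_ne_one_iff ι hι).2 hx)
    refine hno _ (exists_orderOf_eq_mul_of_commute ((Nat.coprime_primes Fact.out Fact.out).2 htw)
      he ?_ ?_ (mul_inv_eq_iff_eq_mul.1 hxz)).choose_spec
    · rw [orderOf_coe]; exact hZ.dvd_orderOf hz
    · rw [orderOf_coe]; exact (hZ.isOfFinOrder (Fact.out : w.Prime).ne_zero z).orderOf_pos.ne'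
  obtain ⟨z, hz⟩ := (ne_bot_iff_exists_ne_one).1 hZ1
  have hwt : w ∣ t := (hZ.dvd_orderOf hz).trans
    (orderOf_dvd_of_pow_eq_one (pow_eq_one_of_fixedPointFree hfree z))
  exact htw ((Nat.prime_dvd_prime_iff_eq Fact.out Fact.out).1 hwt).symm

end OrderMul

open scoped Pointwise in
lemma QuotientGroup.mk'_comp_subtype_surjective {G : Type*} [Group G] {N K : Subgroup G}
    [K.Normal] (h : N ⊔ K = ⊤) : Surjective ((QuotientGroup.mk' K).comp N.subtype) := by
  intro q
  obtain ⟨g, rfl⟩ := QuotientGroup.mk'_surjective K q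
  have hg : g ∈ (N : Set G) * (K : Set G) := by rw [← mul_normal, h]; exact mem_top g
  obtain ⟨n, hn, k, hk, rfl⟩ := hg
  exact ⟨⟨n, hn⟩, by simp [(QuotientGroup.eq_one_iff k).2 hk]⟩

lemma Sylow.not_isCyclic_of_surjective {G H : Type*} [Group G] [Finite G] [Group H]
    {p : ℕ} [Fact p.Prime] {f : G →* H} (hf : Surjective f) {P : Sylow p H} (hP : ¬ IsCyclic P)
    (R : Sylow p G) : ¬ IsCyclic R := by
  intro hR
  have : Finite H := Finite.of_surjective f hf
  obtain ⟨h, hh⟩ := MulAction.exists_smul_eq H (Sylow.mapSurjective hf R) P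
  have : IsCyclic (Sylow.mapSurjective hf R) := by
    rw [Sylow.coe_mapSurjective]
    exact isCyclic_of_surjective _ (f.subgroupMap_surjective R)
  exact hP (hh ▸ isCyclic_of_surjective _ (Sylow.equivSMul _ h).surjective)

theorem exists_order_mul_of_noncyclic_sylow
    (G : Type*) [Group G] [Finite G] (K : Subgroup G) (hKn : K.Normal)
    (w t : ℕ) (hw : w.Prime) (hwK : w ∣ Nat.card K)
    (ht : t.Prime) (htodd : Odd t) (htw : t ≠ w)
    (hP : ∃ P : Sylow t (G ⧸ K), ¬ IsCyclic P) :
    ∃ g : G, orderOf g = t * w := by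
  have := Fact.mk hw
  have := Fact.mk ht
  obtain ⟨W⟩ : Nonempty (Sylow w K) := inferInstance
  set WG := (W : Subgroup K).map K.subtype
  set N := normalizer (WG : Set G)
  obtain ⟨P, hP⟩ := hP
  obtain ⟨R⟩ : Nonempty (Sylow t N) := inferInstance
  obtain ⟨ι, hι⟩ := R.isPGroup'.exists_injective_zmodProd ht htodd <|
    Sylow.not_isCyclic_of_surjective
      (QuotientGroup.mk'_comp_subtype_surjective (Sylow.normalizer_sup_eq_top W)) hP R
  have hWN : WG.subgroupOf N ≠ ⊥ := by
    rw [Ne, subgroupOf_eq_bot, disjoint_of_le_iff_left_eq_bot le_normalizer,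
      map_eq_bot_iff_of_injective _ K.subtype_injective]
    exact W.ne_bot_of_dvd_card hwK
  have : (WG.subgroupOf N).Normal := normal_in_normalizer
  obtain ⟨Z, _, _, hZ, hZ1⟩ := IsPGroup.exists_normal_isMulCommutative (W := WG.subgroupOf N)
    (W.isPGroup'.map K.subtype).comap_subtype hWN
  obtain ⟨g, hg⟩ := exists_orderOf_eq_mul_of_injective_zmodProd htw hZ hZ1
    (ι := R.1.subtype.comp ι) (R.1.subtype_injective.comp hι)
  exact ⟨g, by rwa [orderOf_coe]⟩
end
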